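/- With the notation below, for every x, y ∈ O_{K,S}^× there exist a multi-index β ∈ I = {0, …, 2r+1}^k and an index j₀ ∈ {1, …, 2s_∞+1} such that, for every i ∈ {1, …, c_K} and every place 𝔭 ∈ S (finite or infinite): ord_𝔭(P^β x) ≠ ord_𝔭(q_{i,j₀}) and ord_𝔭(P^β y) ≠ ord_𝔭(q_{i,j₀} x). -/

import Mathlib

/-! At a finite place `𝔭 ∈ S` we have `ord_𝔭(q_{i,j}) = 0` and
`ord_𝔭(P^β) = ∑ β_m ord_𝔭(P_m)`, a linear form in `β` that is not identically zero, and both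
inequalities only ask this form to avoid two values. Choose `β_1, …, β_k` in turn: when `β_m` is
chosen, only the (at most `r`) places above `P_m` whose last nonvanishing coefficient is
`ord_𝔭(P_m)` still have to be served, each forbidding at most two values, so `2r + 2` values of
`β_m` suffice. At an infinite place, `ord_∞(q_{i,j})` is a strictly decreasing function of
`deg q_{i,j}`, hence depends only on `j`, injectively; each of the `s_∞` infinite places then rules
out at most two indices `j`, and `2s_∞ + 1` indices suffice. -/

open FirstOrder Language IsDedekindDomain Polynomial

set_option linter.unusedSectionVars false

namespace Paper

section HolomorphyRings

variable {R : Type*} [CommRing R] [IsDedekindDomain R]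
variable {K : Type*} [Field K] [Algebra R K] [IsFractionRing R K]

/-- The subring of elements of `K` that are integral at every prime satisfying `P`. -/
def integralAt (P : HeightOneSpectrum R → Prop) : Subring K where
  carrier := {x : K | ∀ v : HeightOneSpectrum R, P v → v.valuation K x ≤ 1}
  zero_mem' := fun v _ => by simp only [Valuation.map_zero]; exact zero_le_one
  one_mem' := fun v _ => le_of_eq (Valuation.map_one _)
  add_mem' := fun {x y} hx hy v hv =>
    le_trans (Valuation.map_add _ x y) (max_le (hx v hv) (hy v hv))
  mul_mem' := fun {x y} hx hy v hv => by
    rw [Valuation.map_mul]; exact mul_le_one' (hx v hv) (hy v hv)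
  neg_mem' := fun {x} hx v hv => by rw [Valuation.map_neg]; exact hx v hv

theorem mem_integralAt {P : HeightOneSpectrum R → Prop} {x : K} :
    x ∈ (integralAt P : Subring K) ↔
      ∀ v : HeightOneSpectrum R, P v → v.valuation K x ≤ 1 :=
  Iff.rfl

theorem algebraMap_mem_integralAt (P : HeightOneSpectrum R → Prop) (r : R) :
    algebraMap R K r ∈ (integralAt P : Subring K) :=
  fun v _ => v.valuation_le_one r

/-- The normalized additive `v`-adic valuation of an element of `K`, as an integer
(with junk value `0` at `x = 0`). -/
noncomputable def ordAt (v : HeightOneSpectrum R) (x : K) : ℤ :=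
  if h : v.valuation K x = 0 then 0 else - Multiplicative.toAdd (WithZero.unzero h)

end HolomorphyRings

section FunctionFieldSetting

variable (p : ℕ) [Fact p.Prime]
variable (K : Type*) [Field K] [Algebra (RatFunc (ZMod p)) K]
  [Algebra (Polynomial (ZMod p)) K]
  [IsScalarTower (Polynomial (ZMod p)) (RatFunc (ZMod p)) K]
  [FunctionField (ZMod p) K]
  [Algebra.IsSeparable (RatFunc (ZMod p)) K]

/-- The ring of integers of the function field `K`: the integral closure of
`𝔽_p[t]` in `K`. -/
noncomputable abbrev OK := FunctionField.ringOfIntegers (ZMod p) K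

/-- The image in `O_K` of a polynomial over `𝔽_p`. -/
noncomputable def polyToOK (f : Polynomial (ZMod p)) : OK p K :=
  ⟨algebraMap (Polynomial (ZMod p)) K f, isIntegral_algebraMap⟩

/-- The holomorphy ring `O_{K,S}` when `S` consists of all the infinite places
together with the finite set `Sf` of finite places: the elements of `K` integral
at every finite place outside `Sf`. -/
noncomputable abbrev holoFin (Sf : Finset (HeightOneSpectrum (OK p K))) : Subring K :=
  integralAt (fun v => v ∉ Sf)

/-- The holomorphy ring `O_{K,S}` when `S` is the complement of the finite set `T`
of finite places: the elements of `K` integral at each prime of `T`. -/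
noncomputable abbrev holoCof (T : Finset (HeightOneSpectrum (OK p K))) : Subring K :=
  integralAt (fun v => v ∈ T)

theorem polyMem_holoFin (Sf : Finset (HeightOneSpectrum (OK p K)))
    (f : Polynomial (ZMod p)) :
    algebraMap (Polynomial (ZMod p)) K f ∈ holoFin p K Sf :=
  algebraMap_mem_integralAt _ (polyToOK p K f)

/-- The image of `t` in `K`. -/
noncomputable def tK : K := algebraMap (RatFunc (ZMod p)) K RatFunc.X

theorem tK_eqPoly : tK p K = algebraMap (Polynomial (ZMod p)) K Polynomial.X := by
  rw [IsScalarTower.algebraMap_apply (Polynomial (ZMod p)) (RatFunc (ZMod p)) K,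
    RatFunc.algebraMap_X]
  rfl

theorem tK_mem (Pr : HeightOneSpectrum (OK p K) → Prop) :
    tK p K ∈ (integralAt Pr : Subring K) := by
  rw [tK_eqPoly]
  exact algebraMap_mem_integralAt _ (polyToOK p K Polynomial.X)

/-- The valuation subring at infinity of `𝔽_p(t)` (consisting of the rational
functions of degree at most `0`). -/
noncomputable def inftyVSR : ValuationSubring (RatFunc (ZMod p)) :=
  letI := Classical.decEq (RatFunc (ZMod p))
  (FunctionField.inftyValuation (ZMod p)).valuationSubring

/-- The infinite places of `K`: the valuation subrings of `K` lying above the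
place at infinity of `𝔽_p(t)`. -/
noncomputable def InfPlace : Type _ :=
  {V : ValuationSubring K // V.comap (algebraMap (RatFunc (ZMod p)) K) = inftyVSR p}

/-- The number of infinite places of `K`. -/
noncomputable def numInfPlaces : ℕ := Nat.card (InfPlace p K)

/-- The infinite places of `K` together with their normalized (surjective,
`ℤ`-valued) additive valuations: `W` enumerates, without repetition, all the
valuation subrings of `K` lying above the place at infinity of `𝔽_p(t)`, and
`ord i` is the corresponding normalized additive valuation. -/
structure InfData where
  /-- the number `s_∞` of infinite places -/
  s : ℕ
  pos : 0 < s
  /-- the valuation subrings at the infinite places -/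
  W : Fin s → ValuationSubring K
  inj : Function.Injective W
  above : ∀ i, (W i).comap (algebraMap (RatFunc (ZMod p)) K) = inftyVSR p
  complete : ∀ V : ValuationSubring K,
    V.comap (algebraMap (RatFunc (ZMod p)) K) = inftyVSR p → ∃ i, V = W i
  /-- the normalized additive valuations `ord_{∞_i}` -/
  ord : Fin s → K → ℤ
  ord_mul : ∀ i (x y : K), x ≠ 0 → y ≠ 0 → ord i (x * y) = ord i x + ord i y
  ord_add : ∀ i (x y : K), x ≠ 0 → y ≠ 0 → x + y ≠ 0 →
    min (ord i x) (ord i y) ≤ ord i (x + y)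
  ord_surj : ∀ i (n : ℤ), ∃ x : K, x ≠ 0 ∧ ord i x = n
  mem_iff : ∀ i (x : K), x ≠ 0 → (x ∈ W i ↔ 0 ≤ ord i x)

/-- `ord_min(x) = min {ord_{∞_i}(x) : i = 1, …, s_∞}`. -/
noncomputable def ordMin (I : InfData p K) (x : K) : ℤ :=
  haveI : Nonempty (Fin I.s) := Fin.pos_iff_nonempty.mp I.pos
  Finset.univ.inf' Finset.univ_nonempty (fun i => I.ord i x)

variable [Algebra (ZMod p) K] [IsScalarTower (ZMod p) (RatFunc (ZMod p)) K]

/-- The number of elements of the field of constants `C_K` of `K` (the integral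
closure of `𝔽_p` in `K`). -/
noncomputable def constCard : ℕ := Nat.card (integralClosure (ZMod p) K)

/-- The degree `deg_K(𝔭) = dim_{C_K}(O_𝔭/𝔭)` of a finite place. -/
noncomputable def degFin (v : HeightOneSpectrum (OK p K)) : ℕ :=
  Nat.log (constCard p K) (Nat.card ((OK p K) ⧸ v.asIdeal))

/-- The degree `deg_K` of an infinite place, computed from the residue field of
its valuation subring. -/
noncomputable def degInfPlace (V : ValuationSubring K) : ℕ :=
  Nat.log (constCard p K) (Nat.card (IsLocalRing.ResidueField V))

/-- `D = max {deg_K(𝔭) : 𝔭 ∈ S}`, over the finite and infinite places of `S`. -/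
noncomputable def maxDeg (Sf : Finset (HeightOneSpectrum (OK p K)))
    (I : InfData p K) : ℕ :=
  max (Sf.sup (degFin p K)) (Finset.univ.sup (fun i => degInfPlace p K (I.W i)))

/-- The ideal class number `h_K` of `O_K`. -/
noncomputable def classNum : ℕ := Nat.card (ClassGroup (OK p K))

/-- `[C_K : 𝔽_p]`. -/
noncomputable def constDeg : ℕ := Nat.log p (constCard p K)

end FunctionFieldSetting

section Pigeonhole

open Finset

theorem exists_forall_notMem_of_injective {α σ β : Type*} [Fintype α] (L : Finset σ)
    (f : σ → α → β) (hf : ∀ ℓ ∈ L, Function.Injective (f ℓ)) (B : σ → Finset β) {c : ℕ}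
    (hB : ∀ ℓ ∈ L, #(B ℓ) ≤ c) (hc : c * #L < Fintype.card α) :
    ∃ a, ∀ ℓ ∈ L, f ℓ a ∉ B ℓ := by
  classical
  set bad := L.biUnion fun ℓ => univ.filter fun a => f ℓ a ∈ B ℓ
  have hbad : #bad ≤ c * #L := calc
    #bad ≤ ∑ ℓ ∈ L, #(univ.filter fun a => f ℓ a ∈ B ℓ) := card_biUnion_le
    _ ≤ ∑ _ℓ ∈ L, c := sum_le_sum fun ℓ hℓ =>
      (card_le_card_of_injOn (f ℓ) (fun a ha => (mem_filter.mp ha).2) (hf ℓ hℓ).injOn).trans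
        (hB ℓ hℓ)
    _ = c * #L := by rw [sum_const, smul_eq_mul, mul_comm]
  obtain ⟨a, -, ha⟩ := exists_mem_notMem_of_card_lt_card (s := bad) (t := univ)
    (by rw [card_univ]; omega)
  exact ⟨a, fun ℓ hℓ h => ha (mem_biUnion.mpr ⟨ℓ, hℓ, mem_filter.mpr ⟨mem_univ a, h⟩⟩)⟩

theorem exists_sum_mul_notMem {σ : Type*} {c r n k : ℕ} (V : Finset σ) (a : σ → Fin k → ℤ)
    (B : σ → Finset ℤ) (hB : ∀ v ∈ V, #(B v) ≤ c) (hn : c * r < n)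
    (ha : ∀ v ∈ V, ∃ i, a v i ≠ 0) (hr : ∀ i, #(V.filter (a · i ≠ 0)) ≤ r) :
    ∃ β : Fin k → Fin n, ∀ v ∈ V, ∑ i, ((β i : ℕ) : ℤ) * a v i ∉ B v := by
  induction k generalizing V with
  | zero =>
    refine ⟨Fin.elim0, fun v hv => ?_⟩
    obtain ⟨i, -⟩ := ha v hv
    exact i.elim0
  | succ k ih =>
    set V₀ := V.filter (a · (Fin.last k) = 0)
    set V₁ := V.filter (a · (Fin.last k) ≠ 0)
    have hV₀ : ∀ v ∈ V₀, ∃ i : Fin k, a v i.castSucc ≠ 0 := by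
      intro v hv
      obtain ⟨hvV, hlast⟩ := mem_filter.mp hv
      obtain ⟨i, hi⟩ := ha v hvV
      induction i using Fin.lastCases with
      | last => exact absurd hlast hi
      | cast i => exact ⟨i, hi⟩
    obtain ⟨β, hβ⟩ := ih V₀ (fun v i => a v i.castSucc)
      (fun v hv => hB v (mem_filter.mp hv).1) hV₀
      (fun i => (card_le_card (filter_subset_filter _ (filter_subset _ V))).trans (hr _))
    obtain ⟨b, hb⟩ := exists_forall_notMem_of_injective V₁
      (fun v (b : Fin n) =>
        ∑ i, ((β i : ℕ) : ℤ) * a v i.castSucc + ((b : ℕ) : ℤ) * a v (Fin.last k))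
      (fun v hv b b' h => Fin.ext <| by
        exact_mod_cast mul_right_cancel₀ (mem_filter.mp hv).2 (add_left_cancel h))
      B (fun v hv => hB v (mem_filter.mp hv).1)
      (by rw [Fintype.card_fin]; exact lt_of_le_of_lt (Nat.mul_le_mul_left c (hr _)) hn)
    refine ⟨Fin.snoc β b, fun v hv => ?_⟩
    rw [Fin.sum_univ_castSucc]
    simp only [Fin.snoc_castSucc, Fin.snoc_last]
    by_cases hlast : a v (Fin.last k) = 0
    · rw [hlast, mul_zero, add_zero]
      exact hβ v (mem_filter.mpr ⟨hv, hlast⟩)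
    · exact hb v (mem_filter.mpr ⟨hv, hlast⟩)

end Pigeonhole

section OrdAt

open Finset

variable {R : Type*} [CommRing R] [IsDedekindDomain R]
variable {K : Type*} [Field K] [Algebra R K] [IsFractionRing R K]
variable (v : HeightOneSpectrum R)

theorem ordAt_eq_neg_log (x : K) : ordAt v x = -WithZero.log (v.valuation K x) := by
  unfold ordAt
  split_ifs with h
  · rw [h, WithZero.log_zero, neg_zero]
  · rw [WithZero.toAdd_unzero_eq_log]

theorem ordAt_mul {x y : K} (hx : x ≠ 0) (hy : y ≠ 0) :
    ordAt v (x * y) = ordAt v x + ordAt v y := by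
  have hx' : v.valuation K x ≠ 0 := (Valuation.ne_zero_iff _).mpr hx
  have hy' : v.valuation K y ≠ 0 := (Valuation.ne_zero_iff _).mpr hy
  rw [ordAt_eq_neg_log, ordAt_eq_neg_log, ordAt_eq_neg_log, map_mul, WithZero.log_mul hx' hy']
  ring

theorem ordAt_pow (x : K) (n : ℕ) : ordAt v (x ^ n) = n * ordAt v x := by
  simp only [ordAt_eq_neg_log, map_pow, WithZero.log_pow, nsmul_eq_mul]
  ring

theorem ordAt_prod_pow {ι : Type*} (s : Finset ι) {f : ι → K} (hf : ∀ i ∈ s, f i ≠ 0)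
    (n : ι → ℕ) : ordAt v (∏ i ∈ s, f i ^ n i) = ∑ i ∈ s, (n i : ℤ) * ordAt v (f i) := by
  induction s using Finset.cons_induction with
  | empty => simp [ordAt_eq_neg_log]
  | cons a s ha ih =>
    have hs : ∀ i ∈ s, f i ≠ 0 := fun i hi => hf i (mem_cons_of_mem hi)
    rw [prod_cons, sum_cons, ordAt_mul v (pow_ne_zero _ (hf a (mem_cons_self a s)))
      (prod_ne_zero_iff.mpr fun i hi => pow_ne_zero _ (hs i hi)), ordAt_pow, ih hs]

theorem ordAt_algebraMap_eq_zero_iff {r : R} (hr : r ≠ 0) :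
    ordAt v (algebraMap R K r) = 0 ↔ r ∉ v.asIdeal := by
  have hval : v.valuation K (algebraMap R K r) ≠ 0 :=
    (Valuation.ne_zero_iff _).mpr ((map_ne_zero_iff _ (IsFractionRing.injective R K)).mpr hr)
  rw [← HeightOneSpectrum.valuation_eq_one_iff_notMem (K := K), ordAt_eq_neg_log, neg_eq_zero]
  constructor
  · intro h
    rw [← WithZero.exp_log hval, h, WithZero.exp_zero]
  · intro h
    rw [h, WithZero.log_one]

theorem card_filter_ordAt_ne_zero_le (S : Finset (HeightOneSpectrum R)) {r : R} (hr : r ≠ 0)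
    {m : ℕ} (hm : Nat.card {v : HeightOneSpectrum R // r ∈ v.asIdeal} ≤ m) :
    #(S.filter fun v => ordAt v (algebraMap R K r) ≠ 0) ≤ m := by
  have hfin : {v : HeightOneSpectrum R | r ∈ v.asIdeal}.Finite := by
    simpa only [Ideal.dvd_span_singleton] using
      Ideal.finite_factors (I := Ideal.span {r}) (by simpa using hr)
  rw [← Set.ncard_coe_finset]
  refine (Set.ncard_le_ncard (fun w hw => ?_) hfin).trans hm
  have hw := (mem_filter.mp (mem_coe.mp hw)).2
  rwa [Ne, ordAt_algebraMap_eq_zero_iff (K := K) w hr, not_not] at hw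

theorem exists_exponents_ordAt_prod_pow_notMem {k r c n : ℕ} (S : Finset (HeightOneSpectrum R))
    (P : Fin k → R) (hP : ∀ i, P i ≠ 0) (hS : ∀ v ∈ S, ∃ i, P i ∈ v.asIdeal)
    (hr : ∀ i, Nat.card {v : HeightOneSpectrum R // P i ∈ v.asIdeal} ≤ r)
    (B : HeightOneSpectrum R → Finset ℤ) (hB : ∀ v ∈ S, #(B v) ≤ c) (hn : c * r < n) :
    ∃ β : Fin k → Fin n, ∀ v ∈ S, ordAt v (∏ i, algebraMap R K (P i) ^ (β i : ℕ)) ∉ B v := by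
  have hPK : ∀ i, algebraMap R K (P i) ≠ 0 :=
    fun i => (map_ne_zero_iff _ (IsFractionRing.injective R K)).mpr (hP i)
  obtain ⟨β, hβ⟩ := exists_sum_mul_notMem S (fun v i => ordAt v (algebraMap R K (P i))) B hB hn
    (fun v hv => (hS v hv).imp fun i hi => by
      rwa [Ne, ordAt_algebraMap_eq_zero_iff v (hP i), not_not])
    (fun i => card_filter_ordAt_ne_zero_le S (hP i) (hr i))
  exact ⟨β, fun v hv => by rw [ordAt_prod_pow v _ (fun i _ => hPK i)]; exact hβ v hv⟩

end OrdAt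

section InfinitePlaces

open Finset

variable {p : ℕ} [Fact p.Prime] {K : Type*} [Field K] [Algebra (RatFunc (ZMod p)) K]

theorem mem_inftyVSR_iff {u : RatFunc (ZMod p)} (hu : u ≠ 0) :
    u ∈ inftyVSR p ↔ u.intDegree ≤ 0 := by
  classical
  change RatFunc.inftyValuation (ZMod p) u ≤ 1 ↔ _
  rw [RatFunc.inftyValuation_apply, RatFunc.inftyValuation_of_nonzero _ hu, ← WithZero.exp_zero,
    WithZero.exp_le_exp]

variable (I : InfData p K) (ℓ : Fin I.s)

theorem InfData.ord_div {x y : K} (hx : x ≠ 0) (hy : y ≠ 0) :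
    I.ord ℓ (x / y) = I.ord ℓ x - I.ord ℓ y := by
  have h := I.ord_mul ℓ (x / y) y (div_ne_zero hx hy) hy
  rw [div_mul_cancel₀ x hy] at h
  omega

theorem InfData.algebraMap_mem_W_iff (u : RatFunc (ZMod p)) :
    algebraMap (RatFunc (ZMod p)) K u ∈ I.W ℓ ↔ u ∈ inftyVSR p := by
  rw [← I.above ℓ, ValuationSubring.mem_comap]

variable [Algebra (ZMod p)[X] K] [IsScalarTower (ZMod p)[X] (RatFunc (ZMod p)) K]

theorem algebraMap_polynomial_ne_zero {f : (ZMod p)[X]} (hf : f ≠ 0) :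
    algebraMap (ZMod p)[X] K f ≠ 0 := by
  rw [IsScalarTower.algebraMap_apply (ZMod p)[X] (RatFunc (ZMod p)) K]
  exact (_root_.map_ne_zero _).mpr (RatFunc.algebraMap_ne_zero hf)

theorem polyToOK_ne_zero {f : (ZMod p)[X]} (hf : f ≠ 0) : polyToOK p K f ≠ 0 :=
  fun h => algebraMap_polynomial_ne_zero hf (congrArg Subtype.val h)

theorem InfData.ord_algebraMap_le_iff {f g : (ZMod p)[X]} (hf : f ≠ 0) (hg : g ≠ 0) :
    I.ord ℓ (algebraMap (ZMod p)[X] K g) ≤ I.ord ℓ (algebraMap (ZMod p)[X] K f) ↔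
      f.natDegree ≤ g.natDegree := by
  have hf' := algebraMap_polynomial_ne_zero (K := K) hf
  have hg' := algebraMap_polynomial_ne_zero (K := K) hg
  have hF := RatFunc.algebraMap_ne_zero hf
  have hG := RatFunc.algebraMap_ne_zero hg
  rw [← sub_nonneg, ← I.ord_div ℓ hf' hg', ← I.mem_iff ℓ _ (div_ne_zero hf' hg'),
    IsScalarTower.algebraMap_apply (ZMod p)[X] (RatFunc (ZMod p)) K f,
    IsScalarTower.algebraMap_apply (ZMod p)[X] (RatFunc (ZMod p)) K g, ← map_div₀,
    I.algebraMap_mem_W_iff, mem_inftyVSR_iff (div_ne_zero hF hG), RatFunc.intDegree_div hF hG,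
    RatFunc.intDegree_polynomial, RatFunc.intDegree_polynomial]
  omega

theorem InfData.ord_algebraMap_eq_iff {f g : (ZMod p)[X]} (hf : f ≠ 0) (hg : g ≠ 0) :
    I.ord ℓ (algebraMap (ZMod p)[X] K f) = I.ord ℓ (algebraMap (ZMod p)[X] K g) ↔
      f.natDegree = g.natDegree := by
  rw [le_antisymm_iff, le_antisymm_iff, I.ord_algebraMap_le_iff ℓ hf hg,
    I.ord_algebraMap_le_iff ℓ hg hf, and_comm]

theorem InfData.exists_index_ord_notMem {ι : Type*} {c n : ℕ} (Q : ι → Fin n → (ZMod p)[X])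
    (hQ : ∀ i j, Q i j ≠ 0) (hdeg₁ : ∀ i i' j, (Q i j).natDegree = (Q i' j).natDegree)
    (hdeg₂ : ∀ i j j', j ≠ j' → (Q i j).natDegree ≠ (Q i j').natDegree)
    (B : Fin I.s → Finset ℤ) (hB : ∀ ℓ, #(B ℓ) ≤ c) (hn : c * I.s < n) :
    ∃ j, ∀ i ℓ, I.ord ℓ (algebraMap (ZMod p)[X] K (Q i j)) ∉ B ℓ := by
  rcases isEmpty_or_nonempty ι with hι | ⟨⟨i₀⟩⟩
  · exact ⟨⟨0, by omega⟩, fun i => isEmptyElim i⟩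
  obtain ⟨j, hj⟩ := exists_forall_notMem_of_injective univ
    (fun ℓ j => I.ord ℓ (algebraMap (ZMod p)[X] K (Q i₀ j)))
    (fun ℓ _ j j' h => not_imp_not.mp (hdeg₂ i₀ j j')
      ((I.ord_algebraMap_eq_iff ℓ (hQ i₀ j) (hQ i₀ j')).mp h))
    B (fun ℓ _ => hB ℓ) (by simpa using hn)
  refine ⟨j, fun i ℓ => ?_⟩
  rw [(I.ord_algebraMap_eq_iff ℓ (hQ i j) (hQ i₀ j)).mpr (hdeg₁ i i₀ j)]
  exact hj ℓ (mem_univ ℓ)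

end InfinitePlaces

section FunctionFieldSetting

variable (p : ℕ) [Fact p.Prime]
variable (K : Type*) [Field K] [Algebra (RatFunc (ZMod p)) K]
  [Algebra (Polynomial (ZMod p)) K]
  [IsScalarTower (Polynomial (ZMod p)) (RatFunc (ZMod p)) K]
  [FunctionField (ZMod p) K]
  [Algebra.IsSeparable (RatFunc (ZMod p)) K]
variable [Algebra (ZMod p) K] [IsScalarTower (ZMod p) (RatFunc (ZMod p)) K]

theorem exists_multiindex_pigeonhole
    (Sf : Finset (HeightOneSpectrum (OK p K))) (I : InfData p K)
    (k r : ℕ) (P : Fin k → Polynomial (ZMod p))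
    (hPirr : ∀ i, Irreducible (P i))
    (hPbelow : ∀ v ∈ Sf, ∃ i, polyToOK p K (P i) ∈ v.asIdeal)
    (hr : ∀ i, Nat.card {v : HeightOneSpectrum (OK p K) // polyToOK p K (P i) ∈ v.asIdeal} ≤ r)
    (Q : Fin (constCard p K) → Fin (2 * I.s + 1) → Polynomial (ZMod p))
    (hQirr : ∀ i j, Irreducible (Q i j))
    (hQnb : ∀ i j, ∀ v ∈ Sf, polyToOK p K (Q i j) ∉ v.asIdeal)
    (hQdeg₁ : ∀ i i' j, (Q i j).natDegree = (Q i' j).natDegree)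
    (hQdeg₂ : ∀ i j j', j ≠ j' → (Q i j).natDegree ≠ (Q i j').natDegree) :
    ∀ x y : (holoFin p K Sf)ˣ,
      ∃ (β : Fin k → Fin (2 * r + 2)) (j₀ : Fin (2 * I.s + 1)),
        ∀ i : Fin (constCard p K),
          (∀ v ∈ Sf,
            ordAt v ((∏ i', algebraMap (Polynomial (ZMod p)) K (P i') ^ (β i' : ℕ)) *
                ((x : holoFin p K Sf) : K)) ≠
              ordAt v (algebraMap (Polynomial (ZMod p)) K (Q i j₀)) ∧
            ordAt v ((∏ i', algebraMap (Polynomial (ZMod p)) K (P i') ^ (β i' : ℕ)) *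
                ((y : holoFin p K Sf) : K)) ≠
              ordAt v (algebraMap (Polynomial (ZMod p)) K (Q i j₀) *
                ((x : holoFin p K Sf) : K))) ∧
          (∀ ℓ : Fin I.s,
            I.ord ℓ ((∏ i', algebraMap (Polynomial (ZMod p)) K (P i') ^ (β i' : ℕ)) *
                ((x : holoFin p K Sf) : K)) ≠
              I.ord ℓ (algebraMap (Polynomial (ZMod p)) K (Q i j₀)) ∧
            I.ord ℓ ((∏ i', algebraMap (Polynomial (ZMod p)) K (P i') ^ (β i' : ℕ)) *
                ((y : holoFin p K Sf) : K)) ≠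
              I.ord ℓ (algebraMap (Polynomial (ZMod p)) K (Q i j₀) *
                ((x : holoFin p K Sf) : K))) := by
  intro x y
  set X : K := ((x : holoFin p K Sf) : K)
  set Y : K := ((y : holoFin p K Sf) : K)
  have hX : X ≠ 0 := fun h => x.ne_zero (Subtype.ext h)
  have hY : Y ≠ 0 := fun h => y.ne_zero (Subtype.ext h)
  obtain ⟨β, hβ⟩ := exists_exponents_ordAt_prod_pow_notMem (K := K) Sf
    (fun i => polyToOK p K (P i)) (fun i => polyToOK_ne_zero (hPirr i).ne_zero) hPbelow hr
    (fun v => {-ordAt v X, ordAt v X - ordAt v Y}) (fun _ _ => Finset.card_le_two)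
    (by omega : 2 * r < 2 * r + 2)
  refine ⟨β, ?_⟩
  set N := ∏ i, algebraMap (Polynomial (ZMod p)) K (P i) ^ (β i : ℕ)
  have hN : N ≠ 0 := Finset.prod_ne_zero_iff.mpr fun i _ =>
    pow_ne_zero _ (algebraMap_polynomial_ne_zero (hPirr i).ne_zero)
  obtain ⟨j₀, hj₀⟩ := I.exists_index_ord_notMem Q (fun i j => (hQirr i j).ne_zero) hQdeg₁ hQdeg₂
    (fun ℓ => {I.ord ℓ (N * X), I.ord ℓ (N * Y) - I.ord ℓ X}) (fun _ => Finset.card_le_two)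
    (by omega : 2 * I.s < 2 * I.s + 1)
  have hQK : ∀ i j, algebraMap (ZMod p)[X] K (Q i j) ≠ 0 :=
    fun i j => algebraMap_polynomial_ne_zero (hQirr i j).ne_zero
  refine ⟨j₀, fun i => ⟨fun v hv => ?_, fun ℓ => ?_⟩⟩
  · have hQ : ordAt v (algebraMap (ZMod p)[X] K (Q i j₀)) = 0 :=
      (ordAt_algebraMap_eq_zero_iff v (polyToOK_ne_zero (hQirr i j₀).ne_zero)).mpr (hQnb i j₀ v hv)
    have hNv : ordAt v N ∉ ({-ordAt v X, ordAt v X - ordAt v Y} : Finset ℤ) := hβ v hv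
    simp only [Finset.mem_insert, Finset.mem_singleton, not_or] at hNv
    rw [ordAt_mul v hN hX, ordAt_mul v hN hY, ordAt_mul v (hQK i j₀) hX, hQ]
    constructor <;> omega
  · have hℓ := hj₀ i ℓ
    simp only [Finset.mem_insert, Finset.mem_singleton, not_or] at hℓ
    rw [I.ord_mul ℓ _ _ (hQK i j₀) hX]
    constructor <;> omega

end FunctionFieldSetting


end Paper
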